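/- Let n ≥ 1, L ≥ 0, L' ≥ 1 and 1 ≤ F ≤ n be integers. Let f be a totally antisymmetric family of polynomials in ℂ[w₁,…,wₙ,v₁,…,vₙ] indexed by F-tuples from {1,…,n}, with each member bihomogeneous of bidegree (L, L'). Then there exists a unique pair (f⁰, g) such that: f⁰ is a totally antisymmetric family indexed by F-tuples with members bihomogeneous of bidegree (L, L') and trace-free (∑_{β=1}^n ∂_{v_β} f⁰(β,γ₂,…,γ_F) = 0 for all indices); g is a totally antisymmetric family indexed by (F−1)-tuples with members bihomogeneous of bidegree (L, L'−1) and trace-free (vacuously if F = 1); and f(γ₁,…,γ_F) = f⁰(γ₁,…,γ_F) + ∑_{k=1}^F (−1)^{k+1} v_{γ_k}·g(γ₁,…,γ̂_k,…,γ_F) for all index tuples. (This is the decomposition Φ₊ = Φ₊^{(1)} + (w̄^α χ^α)·Φ₊^{(2)} into βγ-traceless parts used in Appendix B of the paper.) -/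

import Mathlib

/-!
Let `T` be the trace, `(T f)(γ) = ∑_β ∂_{v_β} f(β, γ)`. If `g` is antisymmetric, trace-free and
of degree `d` in `v`, then Leibniz's rule gives `T (v ∧ g) = (n + d - m) g`: the term `v_β g(γ)`
contributes `n g + d g` by Euler's identity, and each of the `m` terms `± v_{γ_j} g(β, …)`
contributes `-g` because `g` is antisymmetric and trace-free. As `m = F - 1 < n`, the factor
`n + d - m` is non-zero. Applying `T` to `f = f⁰ + v ∧ g` thus forces `g = (n + d - m)⁻¹ T f`;
conversely this `g` is admissible (`T f` is trace-free since the `∂_{v_β}` commute while `f` is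
antisymmetric), and `f⁰ = f - v ∧ g` is then trace-free by the same identity.
-/

open MvPolynomial

noncomputable section

/-- Weight function giving the degree in the `w`-variables (indexed by `Sum.inl`). -/
def wWt (n : ℕ) : (Fin n ⊕ Fin n) → ℕ := Sum.elim (fun _ => 1) (fun _ => 0)

/-- Weight function giving the degree in the `v`-variables (indexed by `Sum.inr`). -/
def vWt (n : ℕ) : (Fin n ⊕ Fin n) → ℕ := Sum.elim (fun _ => 0) (fun _ => 1)

/-- A family of polynomials indexed by tuples is totally antisymmetric if permuting the
index tuple multiplies the value by the sign of the permutation. -/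
def AntisymFam (n m : ℕ)
    (f : (Fin m → Fin n) → MvPolynomial (Fin n ⊕ Fin n) ℂ) : Prop :=
  ∀ (σ : Equiv.Perm (Fin m)) (γ : Fin m → Fin n),
    f (γ ∘ σ) = (Equiv.Perm.sign σ : ℤ) • f γ

/-- A family is trace-free if the contraction `∑_β ∂_{v_β} f(… β …)` over any one of its
index slots vanishes (for a totally antisymmetric family this is equivalent to the
vanishing of the contraction over the first slot; it is vacuous if `m = 0`). -/
def TraceFreeFam (n m : ℕ)
    (f : (Fin m → Fin n) → MvPolynomial (Fin n ⊕ Fin n) ℂ) : Prop :=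
  ∀ (γ : Fin m → Fin n) (i : Fin m),
    ∑ β : Fin n, pderiv (Sum.inr β) (f (Function.update γ i β)) = 0

/-- The antisymmetrized family
`(v ∧ g)(γ₁,…,γ_F) = ∑_k (−1)^{k+1} v_{γ_k} g(γ₁,…,γ̂_k,…,γ_F)`. -/
def vWedge (n m : ℕ) (g : (Fin m → Fin n) → MvPolynomial (Fin n ⊕ Fin n) ℂ) :
    (Fin (m + 1) → Fin n) → MvPolynomial (Fin n ⊕ Fin n) ℂ :=
  fun γ => ∑ k : Fin (m + 1),
    (-1 : ℤ) ^ (k : ℕ) • (MvPolynomial.X (Sum.inr (γ k)) * g (γ ∘ k.succAbove))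

open Equiv Equiv.Perm

namespace MvPolynomial

variable {R σ : Type*} [CommRing R]

theorem pderiv_pderiv_comm (i j : σ) (p : MvPolynomial σ R) :
    pderiv i (pderiv j p) = pderiv j (pderiv i p) := by
  have h : ⁅pderiv i, pderiv j⁆ = (0 : Derivation R (MvPolynomial σ R) (MvPolynomial σ R)) :=
    derivation_ext fun k => by
      rw [Derivation.commutator_apply]
      classical simp [pderiv_X, Pi.single_apply, apply_ite]
  simpa [Derivation.commutator_apply, sub_eq_zero] using congrArg (· p) h

theorem sum_pderiv_X_mul {ι : Type*} [Fintype ι] {e : ι → σ} (he : Function.Injective e)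
    (a : ι) (h : ι → MvPolynomial σ R) :
    ∑ b, pderiv (e b) (X (e a) * h b) = h a + X (e a) * ∑ b, pderiv (e b) (h b) := by
  classical
  simp [pderiv_X, Pi.single_apply, he.eq_iff, Finset.sum_add_distrib, Finset.mul_sum, add_comm]

theorem IsWeightedHomogeneous.smul {S M : Type*} [CommSemiring S] [AddCommMonoid M] {w : σ → M}
    {φ : MvPolynomial σ S} {m : M}
    (h : φ.IsWeightedHomogeneous w m) (r : S) : (r • φ).IsWeightedHomogeneous w m := by
  rw [smul_eq_C_mul]
  exact h.C_mul r

end MvPolynomial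

namespace Fin

theorem exists_perm_comp_succAbove {m : ℕ} (σ : Perm (Fin (m + 1))) (k : Fin (m + 1)) :
    ∃ τ : Perm (Fin m), σ ∘ k.succAbove = (σ k).succAbove ∘ τ ∧
      (-1) ^ (k : ℕ) * sign τ = sign σ * (-1) ^ (σ k : ℕ) := by
  -- conjugating by the two cycles turns `σ` into a permutation fixing `0`
  set e := (σ k).cycleRange * σ * k.cycleRange⁻¹
  obtain ⟨⟨p, τ⟩, hτ⟩ := decomposeFin.symm.surjective e
  obtain rfl : p = 0 := by simpa [e, Perm.inv_def] using congrArg (· 0) hτ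
  refine ⟨τ, funext fun i => ?_, ?_⟩
  · apply (σ k).cycleRange.injective
    simpa [e, Perm.inv_def] using (congrArg (· i.succ) hτ).symm
  · have hsign : sign τ = (-1) ^ (σ k : ℕ) * sign σ * (-1) ^ (k : ℕ) := by
      simpa [e] using congrArg sign hτ
    rw [hsign, show ∀ a b s : ℤˣ, a * (b * s * a) = (a * a) * (s * b) by intros; ac_rfl,
      ← mul_pow]
    simp

theorem cons_comp_decomposeFin_symm {α : Type*} {m : ℕ} (a : α) (x : Fin m → α)
    (τ : Perm (Fin m)) : cons a x ∘ decomposeFin.symm (0, τ) = cons a (x ∘ τ) := by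
  funext j
  cases j using Fin.cases <;> simp

theorem cons_comp_succ_succAbove_eq_update_comp {α : Type*} {m : ℕ} (a : α) (x : Fin m → α)
    (j : Fin m) : cons a x ∘ j.succ.succAbove = Function.update x j a ∘ j.cycleRange.symm := by
  cases m with
  | zero => exact j.elim0
  | succ m =>
    rw [cons_comp_succ_succAbove, ← cons_removeNth_eq_comp_cycleRange_symm]
    simp

theorem cons_update_comp_swap {α : Type*} {m : ℕ} (a b : α) (x : Fin m → α) (i : Fin m) :
    cons a (Function.update x i b) ∘ swap 0 i.succ = cons b (Function.update x i a) := by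
  funext j
  cases j using Fin.cases with
  | zero => simp
  | succ l =>
    rcases eq_or_ne l i with rfl | hl
    · simp [(succ_ne_zero l).symm]
    · rw [Function.comp_apply, swap_apply_of_ne_of_ne (succ_ne_zero l) (succ_injective _ |>.ne hl)]
      simp [hl]

end Fin

abbrev Fam (n m : ℕ) := (Fin m → Fin n) → MvPolynomial (Fin n ⊕ Fin n) ℂ

def vTrace (n m : ℕ) (f : Fam n (m + 1)) : Fam n m :=
  fun γ => ∑ β : Fin n, pderiv (Sum.inr β) (f (Fin.cons β γ))

section Families

variable {n m : ℕ}

theorem AntisymFam.sub {f g : Fam n m} (hf : AntisymFam n m f) (hg : AntisymFam n m g) :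
    AntisymFam n m (f - g) := fun σ γ => by simp [hf σ γ, hg σ γ, smul_sub]

theorem AntisymFam.const_smul {f : Fam n m} (hf : AntisymFam n m f) (c : ℂ) :
    AntisymFam n m (c • f) := fun σ γ => by simp [hf σ γ]

theorem TraceFreeFam.const_smul {f : Fam n m} (hf : TraceFreeFam n m f) (c : ℂ) :
    TraceFreeFam n m (c • f) := fun γ i => by simp [← Finset.smul_sum, hf γ i]

theorem antisymFam_vWedge {g : Fam n m} (hg : AntisymFam n m g) :
    AntisymFam n (m + 1) (vWedge n m g) := by
  intro σ γ
  rw [vWedge, vWedge, Finset.smul_sum]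
  conv_rhs => rw [← Equiv.sum_comp σ]
  refine Finset.sum_congr rfl fun k _ => ?_
  obtain ⟨τ, hτ, hsign⟩ := Fin.exists_perm_comp_succAbove σ k
  rw [Function.comp_assoc, hτ, ← Function.comp_assoc, hg, Function.comp_apply, mul_smul_comm,
    smul_smul, smul_smul]
  congr 1
  simpa using congrArg Units.val hsign

theorem antisymFam_vTrace {f : Fam n (m + 1)} (hf : AntisymFam n (m + 1) f) :
    AntisymFam n m (vTrace n m f) := by
  intro σ γ
  simp only [vTrace, Finset.smul_sum, ← map_zsmul]
  refine Finset.sum_congr rfl fun β _ => ?_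
  rw [← Fin.cons_comp_decomposeFin_symm, hf]
  simp

theorem traceFreeFam_vTrace {f : Fam n (m + 1)} (hf : AntisymFam n (m + 1) f) :
    TraceFreeFam n m (vTrace n m f) := by
  intro γ i
  have hswap : ∀ α β : Fin n, f (Fin.cons α (Function.update γ i β)) =
      - f (Fin.cons β (Function.update γ i α)) := by
    intro α β
    rw [← Fin.cons_update_comp_swap, hf, sign_swap (Fin.succ_ne_zero i).symm]
    simp
  set S := ∑ β : Fin n, pderiv (Sum.inr β) (vTrace n m f (Function.update γ i β))
  have hS : S = -S := by
    simp only [S, vTrace, map_sum]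
    conv_lhs => rw [Finset.sum_comm]
    simp only [← Finset.sum_neg_distrib]
    refine Finset.sum_congr rfl fun α _ => Finset.sum_congr rfl fun β _ => ?_
    rw [hswap β α, map_neg, map_neg, neg_neg, MvPolynomial.pderiv_pderiv_comm]
  exact self_eq_neg.mp hS

theorem sum_X_inr_mul_pderiv_inr {p : MvPolynomial (Fin n ⊕ Fin n) ℂ} {d : ℕ}
    (hp : p.IsWeightedHomogeneous (vWt n) d) :
    ∑ β : Fin n, X (Sum.inr β) * pderiv (Sum.inr β) p = d • p := by
  simpa [Fintype.sum_sum_type, vWt] using hp.sum_weight_X_mul_pderiv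

theorem vTrace_vWedge {g : Fam n m} {d : ℕ} (hga : AntisymFam n m g) (hgt : TraceFreeFam n m g)
    (hgh : ∀ γ, (g γ).IsWeightedHomogeneous (vWt n) d) (γ : Fin m → Fin n) :
    vTrace n m (vWedge n m g) γ = ((n : ℂ) + d - m) • g γ := by
  have hhead : ∑ β : Fin n, pderiv (Sum.inr β) (X (Sum.inr β) * g γ) = ((n : ℂ) + d) • g γ := by
    simp [Finset.sum_add_distrib, sum_X_inr_mul_pderiv_inr (hgh γ), add_smul, add_comm,
      Nat.cast_smul_eq_nsmul, nsmul_eq_mul]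
  have htail (j : Fin m) : ∑ β : Fin n, pderiv (Sum.inr β)
      (X (Sum.inr (γ j)) * g (Fin.cons β γ ∘ j.succ.succAbove)) = (-1 : ℤ) ^ (j : ℕ) • g γ := by
    simp only [Fin.cons_comp_succ_succAbove_eq_update_comp, hga j.cycleRange.symm, mul_smul_comm,
      map_zsmul, ← Finset.smul_sum]
    rw [sum_pderiv_X_mul Sum.inr_injective, hgt γ j, Function.update_eq_self, mul_zero, add_zero]
    simp [Perm.sign_symm]
  simp only [vTrace, vWedge, Fin.sum_univ_succ, map_add, map_sum, map_zsmul,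
    Finset.sum_add_distrib, Fin.cons_zero, Fin.cons_succ, Fin.val_zero, pow_zero, one_smul,
    Fin.succAbove_zero, Fin.cons_comp_succ]
  rw [Finset.sum_comm, hhead]
  have hsign (j : ℕ) : (-1 : ℤ) ^ (j + 1) * (-1) ^ j = -1 := by
    rw [pow_succ, mul_right_comm, ← mul_pow]
    simp
  simp only [← Finset.smul_sum, htail, smul_smul, Fin.val_succ, hsign, Finset.sum_const,
    Finset.card_univ, Fintype.card_fin]
  rw [neg_one_zsmul, ← Nat.cast_smul_eq_nsmul ℂ, ← neg_smul, ← add_smul, sub_eq_add_neg]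

theorem vTrace_sub (f g : Fam n (m + 1)) :
    vTrace n m (f - g) = vTrace n m f - vTrace n m g := by
  funext γ
  simp [vTrace, Finset.sum_sub_distrib]

theorem vTrace_sub_vWedge_eq_zero_iff {f : Fam n (m + 1)} {g : Fam n m} {d : ℕ}
    (hga : AntisymFam n m g) (hgt : TraceFreeFam n m g)
    (hgh : ∀ γ, (g γ).IsWeightedHomogeneous (vWt n) d) (hc : (n : ℂ) + d - m ≠ 0)
    (γ : Fin m → Fin n) :
    vTrace n m (f - vWedge n m g) γ = 0 ↔ g γ = ((n : ℂ) + d - m)⁻¹ • vTrace n m f γ := by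
  rw [vTrace_sub, Pi.sub_apply, vTrace_vWedge hga hgt hgh, sub_eq_zero, eq_inv_smul_iff₀ hc,
    eq_comm]

theorem isWeightedHomogeneous_vWedge {w : Fin n ⊕ Fin n → ℕ} {d e : ℕ}
    (hw : ∀ β, w (Sum.inr β) = e) {g : Fam n m} (hg : ∀ γ, (g γ).IsWeightedHomogeneous w d)
    (γ : Fin (m + 1) → Fin n) : (vWedge n m g γ).IsWeightedHomogeneous w (d + e) := by
  refine IsWeightedHomogeneous.sum _ _ _ fun k _ => ?_
  have hk := (isWeightedHomogeneous_X ℂ w (Sum.inr (γ k))).mul (hg (γ ∘ k.succAbove))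
  rw [hw, add_comm e d] at hk
  rw [← Int.cast_smul_eq_zsmul ℂ]
  exact hk.smul _

theorem isWeightedHomogeneous_vTrace {w : Fin n ⊕ Fin n → ℕ} {d e : ℕ}
    (hw : ∀ β, w (Sum.inr β) = e) {f : Fam n (m + 1)}
    (hf : ∀ γ, (f γ).IsWeightedHomogeneous w (d + e)) (γ : Fin m → Fin n) :
    (vTrace n m f γ).IsWeightedHomogeneous w d :=
  IsWeightedHomogeneous.sum _ _ _ fun β _ => (hf _).pderiv (hw β ▸ rfl)

end Families

theorem stmt14_general (n F₀ L L' : ℕ) (hL' : 1 ≤ L') (hF : F₀ + 1 ≤ n)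
    (f : (Fin (F₀ + 1) → Fin n) → MvPolynomial (Fin n ⊕ Fin n) ℂ)
    (hfa : AntisymFam n (F₀ + 1) f)
    (hfh : ∀ γ, (f γ).IsWeightedHomogeneous (wWt n) L ∧
                (f γ).IsWeightedHomogeneous (vWt n) L') :
    ∃! fg : ((Fin (F₀ + 1) → Fin n) → MvPolynomial (Fin n ⊕ Fin n) ℂ) ×
            ((Fin F₀ → Fin n) → MvPolynomial (Fin n ⊕ Fin n) ℂ),
      AntisymFam n (F₀ + 1) fg.1
      ∧ (∀ γ, (fg.1 γ).IsWeightedHomogeneous (wWt n) L ∧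
              (fg.1 γ).IsWeightedHomogeneous (vWt n) L')
      ∧ (∀ γ' : Fin F₀ → Fin n,
          ∑ β : Fin n, pderiv (Sum.inr β) (fg.1 (Fin.cons β γ')) = 0)
      ∧ AntisymFam n F₀ fg.2
      ∧ (∀ γ, (fg.2 γ).IsWeightedHomogeneous (wWt n) L ∧
              (fg.2 γ).IsWeightedHomogeneous (vWt n) (L' - 1))
      ∧ TraceFreeFam n F₀ fg.2
      ∧ ∀ γ, f γ = fg.1 γ + vWedge n F₀ fg.2 γ := by
  obtain ⟨d, rfl⟩ : ∃ d, L' = d + 1 := ⟨L' - 1, by omega⟩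
  rw [Nat.add_sub_cancel]
  have hc : (n : ℂ) + d - F₀ ≠ 0 := by
    have : ((n + d - F₀ : ℕ) : ℂ) ≠ 0 := by exact_mod_cast (show n + d - F₀ ≠ 0 by omega)
    rwa [Nat.cast_sub (by omega), Nat.cast_add] at this
  set g : Fam n F₀ := ((n : ℂ) + d - F₀)⁻¹ • vTrace n F₀ f
  have hga : AntisymFam n F₀ g := (antisymFam_vTrace hfa).const_smul _
  have hgt : TraceFreeFam n F₀ g := (traceFreeFam_vTrace hfa).const_smul _
  have hgh (γ : Fin F₀ → Fin n) : (g γ).IsWeightedHomogeneous (wWt n) L ∧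
      (g γ).IsWeightedHomogeneous (vWt n) d :=
    ⟨(isWeightedHomogeneous_vTrace (e := 0) (fun _ => rfl) (fun γ => (hfh γ).1) γ).smul _,
      (isWeightedHomogeneous_vTrace (fun _ => rfl) (fun γ => (hfh γ).2) γ).smul _⟩
  refine ⟨(f - vWedge n F₀ g, g), ⟨hfa.sub (antisymFam_vWedge hga), fun γ => ⟨?_, ?_⟩,
    fun γ => (vTrace_sub_vWedge_eq_zero_iff hga hgt (fun γ => (hgh γ).2) hc γ).2 rfl,
    hga, hgh, hgt, fun γ => (sub_add_cancel _ _).symm⟩, ?_⟩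
  · exact (hfh γ).1.sub
      (isWeightedHomogeneous_vWedge (e := 0) (fun _ => rfl) (fun γ => (hgh γ).1) γ)
  · exact (hfh γ).2.sub (isWeightedHomogeneous_vWedge (fun _ => rfl) (fun γ => (hgh γ).2) γ)
  · rintro ⟨p, q⟩ ⟨-, -, hpt, hqa, hqh, hqt, hfpq⟩
    obtain rfl : p = f - vWedge n F₀ q := funext fun γ => by simp [hfpq γ]
    obtain rfl : q = g :=
      funext fun γ => (vTrace_sub_vWedge_eq_zero_iff hqa hqt (fun γ => (hqh γ).2) hc γ).1 (hpt γ)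
    rfl

/-- The decomposition `Φ₊ = Φ₊^{(1)} + (w̄^α χ^α)·Φ₊^{(2)}` of Appendix B: any totally
antisymmetric family `f` of bidegree `(L,L')` indexed by `F`-tuples (with
`1 ≤ F ≤ n`, `L' ≥ 1`, `F = F₀ + 1`) decomposes uniquely as `f = f⁰ + v ∧ g` with
`f⁰` trace-free of bidegree `(L,L')` and `g` totally antisymmetric trace-free of
bidegree `(L, L'−1)` indexed by `(F−1)`-tuples. -/
theorem stmt14 (n F₀ L L' : ℕ) (hn : 1 ≤ n) (hL' : 1 ≤ L') (hF : F₀ + 1 ≤ n)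
    (f : (Fin (F₀ + 1) → Fin n) → MvPolynomial (Fin n ⊕ Fin n) ℂ)
    (hfa : AntisymFam n (F₀ + 1) f)
    (hfh : ∀ γ, (f γ).IsWeightedHomogeneous (wWt n) L ∧
                (f γ).IsWeightedHomogeneous (vWt n) L') :
    ∃! fg : ((Fin (F₀ + 1) → Fin n) → MvPolynomial (Fin n ⊕ Fin n) ℂ) ×
            ((Fin F₀ → Fin n) → MvPolynomial (Fin n ⊕ Fin n) ℂ),
      AntisymFam n (F₀ + 1) fg.1
      ∧ (∀ γ, (fg.1 γ).IsWeightedHomogeneous (wWt n) L ∧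
              (fg.1 γ).IsWeightedHomogeneous (vWt n) L')
      ∧ (∀ γ' : Fin F₀ → Fin n,
          ∑ β : Fin n, pderiv (Sum.inr β) (fg.1 (Fin.cons β γ')) = 0)
      ∧ AntisymFam n F₀ fg.2
      ∧ (∀ γ, (fg.2 γ).IsWeightedHomogeneous (wWt n) L ∧
              (fg.2 γ).IsWeightedHomogeneous (vWt n) (L' - 1))
      ∧ TraceFreeFam n F₀ fg.2
      ∧ ∀ γ, f γ = fg.1 γ + vWedge n F₀ fg.2 γ :=
  stmt14_general n F₀ L L' hL' hF f hfa hfh
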